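/- arXiv:2011.09960 — 4 statements merged into one kernel-verified Lean document; each statement's English description precedes it below -/
import Mathlib

section
/- For every real θ ∈ [0,1], every real ε > 0, and every integer n ≥ 2, the classical supremum M_n^C(ε;J_θ) equals ((f_θ(e^ε,1) + f_θ(1,e^ε))/(n−1)) · max_{1 ≤ k ≤ ⌊n/2⌋} k(n−k)/(k·e^ε + n − k), where f_θ(α,β) = (α−β)²/((1−θ)α + θβ). -/
open scoped BigOperators Classical ComplexOrder
open Matrix

noncomputable section

/-- `p` is a probability vector in `ℝ^d`. -/
def IsProbVec {d : ℕ} (p : Fin d → ℝ) : Prop :=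
  (∀ k, 0 ≤ p k) ∧ ∑ k, p k = 1

/-- `(p i)_{i=1}^n` is an `ε`-differentially private `n`-tuple of probability vectors. -/
def IsDP {n d : ℕ} (ε : ℝ) (p : Fin n → Fin d → ℝ) : Prop :=
  (∀ i, IsProbVec (p i)) ∧ ∀ i j k, p i k ≤ Real.exp ε * p j k

/-- Classical RLD Fisher information `J_θ(p,q)`. -/
def Jc {d : ℕ} (θ : ℝ) (p q : Fin d → ℝ) : ℝ :=
  ∑ k, (q k - p k) ^ 2 / ((1 - θ) * p k + θ * q k)

/-- `ρ` is a density matrix on `ℂ^d`. -/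
def IsDensityMatrix {d : ℕ} (ρ : Matrix (Fin d) (Fin d) ℂ) : Prop :=
  ρ.PosSemidef ∧ ρ.trace = 1

/-- `(ρ i)_{i=1}^n` is a classical-quantum `ε`-differentially private `n`-tuple. -/
def IsCQDP {n d : ℕ} (ε : ℝ) (ρ : Fin n → Matrix (Fin d) (Fin d) ℂ) : Prop :=
  (∀ i, IsDensityMatrix (ρ i)) ∧ ∀ i j, (Real.exp ε • ρ j - ρ i).PosSemidef

/-- `(ρ i)_{i=1}^n` lies in the essentially classical set `EC_n(ε)`. -/
def InEC {n d : ℕ} (ε : ℝ) (ρ : Fin n → Matrix (Fin d) (Fin d) ℂ) : Prop :=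
  ∃ (m : ℕ) (p : Fin n → Fin m → ℝ) (σ : Fin m → Matrix (Fin d) (Fin d) ℂ),
    IsDP ε p ∧ (∀ k, IsDensityMatrix (σ k)) ∧ ∀ i, ρ i = ∑ k, (p i k : ℂ) • σ k

/-- Quantum RLD Fisher information `J_θ(ρ,σ) = Tr((σ−ρ)²((1−θ)ρ+θσ)⁻¹)`. -/
def Jq {d : ℕ} (θ : ℝ) (ρ σ : Matrix (Fin d) (Fin d) ℂ) : ℝ :=
  (((σ - ρ) ^ 2 * ((1 - θ : ℂ) • ρ + (θ : ℂ) • σ)⁻¹).trace).re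

/-- The function `f_θ(α,β) = (α−β)²/((1−θ)α+θβ)`. -/
def fTheta (θ α β : ℝ) : ℝ := (α - β) ^ 2 / ((1 - θ) * α + θ * β)

/-- `min_{i≠j} J_θ(p_i,p_j)` (classical). -/
def minPairsC {n d : ℕ} (θ : ℝ) (p : Fin n → Fin d → ℝ) : ℝ :=
  ⨅ ij : {q : Fin n × Fin n // q.1 ≠ q.2}, Jc θ (p ij.val.1) (p ij.val.2)

/-- `min_{i≠j} J_θ(ρ_i,ρ_j)` (quantum). -/
def minPairsQ {n d : ℕ} (θ : ℝ) (ρ : Fin n → Matrix (Fin d) (Fin d) ℂ) : ℝ :=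
  ⨅ ij : {q : Fin n × Fin n // q.1 ≠ q.2}, Jq θ (ρ ij.val.1) (ρ ij.val.2)

/-- `avg_{i≠j} J_θ(p_i,p_j)` (classical): arithmetic mean over ordered pairs `i ≠ j`. -/
def avgPairsC {n d : ℕ} (θ : ℝ) (p : Fin n → Fin d → ℝ) : ℝ :=
  (∑ i, ∑ j, if i ≠ j then Jc θ (p i) (p j) else 0) / ((n : ℝ) * ((n : ℝ) - 1))

/-- `avg_{i≠j} J_θ(ρ_i,ρ_j)` (quantum): arithmetic mean over ordered pairs `i ≠ j`. -/
def avgPairsQ {n d : ℕ} (θ : ℝ) (ρ : Fin n → Matrix (Fin d) (Fin d) ℂ) : ℝ :=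
  (∑ i, ∑ j, if i ≠ j then Jq θ (ρ i) (ρ j) else 0) / ((n : ℝ) * ((n : ℝ) - 1))

/-- `M_n^C(ε;J_θ)`: supremum of `min_{i≠j} J_θ(p_i,p_j)` over `ε`-DP `n`-tuples with
positive entries, over all dimensions `d`. -/
def MC (n : ℕ) (ε θ : ℝ) : ℝ :=
  sSup {x : ℝ | ∃ (d : ℕ) (p : Fin n → Fin d → ℝ),
    IsDP ε p ∧ (∀ i k, 0 < p i k) ∧ x = minPairsC θ p}

/-- `M_n^EC(ε;J_θ)`: supremum of `min_{i≠j} J_θ(ρ_i,ρ_j)` over full-rank `n`-tuples in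
`EC_n(ε)`, over all dimensions `d`. -/
def MEC (n : ℕ) (ε θ : ℝ) : ℝ :=
  sSup {x : ℝ | ∃ (d : ℕ) (ρ : Fin n → Matrix (Fin d) (Fin d) ℂ),
    InEC ε ρ ∧ (∀ i, (ρ i).PosDef) ∧ x = minPairsQ θ ρ}

/-- `M_n^CQ(ε;J_θ)`: supremum of `min_{i≠j} J_θ(ρ_i,ρ_j)` over full-rank CQ `ε`-DP
`n`-tuples, over all dimensions `d`. -/
def MCQ (n : ℕ) (ε θ : ℝ) : ℝ :=
  sSup {x : ℝ | ∃ (d : ℕ) (ρ : Fin n → Matrix (Fin d) (Fin d) ℂ),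
    IsCQDP ε ρ ∧ (∀ i, (ρ i).PosDef) ∧ x = minPairsQ θ ρ}

/-- `M_2^C(ε;J_θ)` as the supremum of `J_θ(p,q)` over `ε`-DP pairs with positive entries. -/
def M2C (ε θ : ℝ) : ℝ :=
  sSup {x : ℝ | ∃ (d : ℕ) (p q : Fin d → ℝ),
    IsProbVec p ∧ IsProbVec q ∧ (∀ k, 0 < p k) ∧ (∀ k, 0 < q k) ∧
    (∀ k, p k ≤ Real.exp ε * q k ∧ q k ≤ Real.exp ε * p k) ∧
    x = Jc θ p q}

/-- `max_{1 ≤ k ≤ n/2} k(n−k)/(k e^ε + n − k)`. -/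
def maxK (n : ℕ) (ε : ℝ) : ℝ :=
  sSup {x : ℝ | ∃ k : ℕ, 1 ≤ k ∧ 2 * k ≤ n ∧
    x = ((k : ℝ) * ((n : ℝ) - (k : ℝ))) / ((k : ℝ) * Real.exp ε + (n : ℝ) - (k : ℝ))}

/-!
For the upper bound, the minimum over pairs is at most the average over pairs, and
`∑_{i,j} J_θ(p_i, p_j)` splits over the coordinates. In one coordinate the values `a_i = p_i(k)`
satisfy `a_i ≤ e^ε a_j`, and convexity of `a ↦ f_θ(a, b)` on `[b, e^ε b]` gives
`(e^ε - 1) f_θ(a, b) ≤ f_θ(e^ε, 1) (a - b)⁺ + f_θ(1, e^ε) (b - a)⁺`. Everything is thereby reduced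
to `∑_{i,j} (a_i - a_j)⁺ ≤ (e^ε - 1) M ∑_i a_i` with `M = maxK n ε`. Once `a` is sorted, both
sides are linear in `a_0` and in the increments `a_{m+1} - a_m ≥ 0`, whose total is at most
`(e^ε - 1) a_0`; for the step tuple with `k` entries `e^ε` and `n - k` entries `1` the inequality
is `k (n - k) ≤ M (k e^ε + n - k)`, which holds by the choice of `M`.

The bound is attained: for `k` maximising `maxK`, let the outputs be the `k`-subsets `S` of the
inputs, with `p_i(S)` proportional to `e^ε` if `i ∈ S` and to `1` otherwise. By symmetry all pairs
`i ≠ j` have the same `J_θ`, which is computed by counting subsets.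
-/

open Finset

section FTheta

variable {θ : ℝ}

lemma fTheta_denom_pos (hθ : θ ∈ Set.Icc (0 : ℝ) 1) {a b : ℝ} (ha : 0 < a) (hb : 0 < b) :
    0 < (1 - θ) * a + θ * b := by
  rcases hθ with ⟨hθ0, hθ1⟩
  rcases hθ0.eq_or_lt with rfl | hθ0
  · simpa using ha
  · nlinarith

lemma fTheta_nonneg (hθ : θ ∈ Set.Icc (0 : ℝ) 1) {a b : ℝ} (ha : 0 < a) (hb : 0 < b) :
    0 ≤ fTheta θ a b :=
  div_nonneg (sq_nonneg _) (fTheta_denom_pos hθ ha hb).le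

lemma fTheta_self (a : ℝ) : fTheta θ a a = 0 := by
  simp [fTheta]

lemma fTheta_swap (a b : ℝ) : fTheta θ a b = fTheta (1 - θ) b a := by
  unfold fTheta
  congr 1 <;> ring

lemma fTheta_mul_mul (c a b : ℝ) : fTheta θ (c * a) (c * b) = c * fTheta θ a b := by
  unfold fTheta
  rw [show (c * a - c * b) ^ 2 = (c * c) * (a - b) ^ 2 by ring,
    show (1 - θ) * (c * a) + θ * (c * b) = c * ((1 - θ) * a + θ * b) by ring,
    mul_div_mul_comm, mul_self_div_self]

lemma Jc_eq_sum_fTheta {d : ℕ} (p q : Fin d → ℝ) : Jc θ p q = ∑ k, fTheta θ (p k) (q k) := by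
  unfold Jc fTheta
  congr 1 with k
  rw [sub_sq_comm]

lemma fTheta_le_of_le (hθ : θ ∈ Set.Icc (0 : ℝ) 1) {t a b : ℝ} (ht : 1 < t) (hb : 0 < b)
    (hba : b ≤ a) (hab : a ≤ t * b) :
    fTheta θ a b ≤ (a - b) * fTheta θ t 1 / (t - 1) := by
  have hDab := fTheta_denom_pos hθ (hb.trans_le hba) hb
  have hDt := fTheta_denom_pos hθ (one_pos.trans ht) one_pos
  have hrhs : (a - b) * fTheta θ t 1 / (t - 1) = (a - b) * (t - 1) / ((1 - θ) * t + θ * 1) := by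
    unfold fTheta
    field_simp [(sub_pos.2 ht).ne']
  rw [hrhs, fTheta, div_le_div_iff₀ hDab hDt]
  -- `(t - 1) ((1 - θ) a + θ b) - (a - b) ((1 - θ) t + θ) = t b - a`
  nlinarith [mul_nonneg (sub_nonneg.2 hba) (sub_nonneg.2 hab)]

lemma fTheta_le_posPart (hθ : θ ∈ Set.Icc (0 : ℝ) 1) {t a b : ℝ} (ht : 1 < t)
    (ha : 0 < a) (hb : 0 < b) (hab : a ≤ t * b) (hba : b ≤ t * a) :
    fTheta θ a b ≤ (fTheta θ t 1 * (a - b)⁺ + fTheta θ 1 t * (b - a)⁺) / (t - 1) := by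
  rcases le_total b a with h | h
  · rw [posPart_of_nonneg (sub_nonneg.2 h), posPart_of_nonpos (sub_nonpos.2 h), mul_zero,
      add_zero, mul_comm]
    exact fTheta_le_of_le hθ ht hb h hab
  · have hθ' : 1 - θ ∈ Set.Icc (0 : ℝ) 1 := ⟨by linarith [hθ.2], by linarith [hθ.1]⟩
    rw [posPart_of_nonpos (sub_nonpos.2 h), posPart_of_nonneg (sub_nonneg.2 h), mul_zero,
      zero_add, mul_comm, fTheta_swap, fTheta_swap 1 t]
    exact fTheta_le_of_le hθ' ht ha h hba

end FTheta

section SortedSums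

lemma sum_range_succ_sum_range (n : ℕ) (g : ℕ → ℝ) :
    ∑ i ∈ range (n + 1), ∑ m ∈ range i, g m = ∑ m ∈ range n, ((n : ℝ) - m) * g m := by
  induction n with
  | zero => simp
  | succ n ih =>
    rw [sum_range_succ, ih, sum_range_succ, sum_range_succ, ← add_assoc, ← sum_add_distrib]
    push_cast
    congr 1
    · exact sum_congr rfl fun m _ => by ring
    · ring

lemma sum_range_sub_eq_sum_range_mul (A : ℕ → ℝ) (i : ℕ) :
    ∑ j ∈ range i, (A i - A j) = ∑ m ∈ range i, ((m : ℝ) + 1) * (A (m + 1) - A m) := by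
  induction i with
  | zero => simp
  | succ i ih =>
    have hshift : ∑ j ∈ range i, (A (i + 1) - A j)
        = ∑ j ∈ range i, (A i - A j) + i * (A (i + 1) - A i) := by
      simp only [sum_sub_distrib, sum_const, card_range, nsmul_eq_mul]
      ring
    rw [sum_range_succ, hshift, ih, sum_range_succ]
    ring

variable {A : ℕ → ℝ}

lemma sum_posPart_sub_of_monotone (hA : Monotone A) {i n : ℕ} (hin : i ≤ n) :
    ∑ j ∈ range n, (A i - A j)⁺ = ∑ j ∈ range i, (A i - A j) := by
  rw [← sum_range_add_sum_Ico _ hin, sum_congr rfl fun j hj =>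
      posPart_of_nonneg (sub_nonneg.2 (hA (mem_range.1 hj).le)),
    sum_eq_zero fun j hj => posPart_of_nonpos (sub_nonpos.2 (hA (mem_Ico.1 hj).1)), add_zero]

lemma sum_sum_posPart_sub_of_monotone (hA : Monotone A) (N : ℕ) :
    ∑ i ∈ range (N + 1), ∑ j ∈ range (N + 1), (A i - A j)⁺
      = ∑ m ∈ range N, ((N : ℝ) - m) * (((m : ℝ) + 1) * (A (m + 1) - A m)) := by
  rw [sum_congr rfl fun i hi =>
      sum_posPart_sub_of_monotone hA (mem_range.1 hi).le |>.trans
        (sum_range_sub_eq_sum_range_mul A i)]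
  exact sum_range_succ_sum_range N _

lemma sum_range_succ_eq_add_sum_sub (A : ℕ → ℝ) (N : ℕ) :
    ∑ i ∈ range (N + 1), A i
      = (N + 1) * A 0 + ∑ m ∈ range N, ((N : ℝ) - m) * (A (m + 1) - A m) := by
  rw [← sum_range_succ_sum_range]
  simp only [sum_range_sub]
  rw [sum_sub_distrib, sum_const, card_range, nsmul_eq_mul]
  push_cast
  ring

lemma sum_sum_posPart_sub_le_of_monotone {N : ℕ} {t M : ℝ} (hM : 0 ≤ M)
    (hMk : ∀ k : ℕ, 1 ≤ k → k ≤ N →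
      (k : ℝ) * ((N + 1 : ℝ) - k) ≤ M * (k * t + ((N + 1 : ℝ) - k)))
    (hA : Monotone A) (hAN : A N ≤ t * A 0) :
    ∑ i ∈ range (N + 1), ∑ j ∈ range (N + 1), (A i - A j)⁺
      ≤ (t - 1) * M * ∑ i ∈ range (N + 1), A i := by
  rw [sum_sum_posPart_sub_of_monotone hA, sum_range_succ_eq_add_sum_sub]
  have hstep : ∀ m ∈ range N, ((N : ℝ) - m) * (((m : ℝ) + 1) * (A (m + 1) - A m))
      ≤ (t - 1) * M * (((N : ℝ) - m) * (A (m + 1) - A m)) + M * (N + 1) * (A (m + 1) - A m) := by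
    intro m hm
    have hmN := mem_range.1 hm
    have hk := hMk (N - m) (by omega) (by omega)
    rw [Nat.cast_sub hmN.le] at hk
    nlinarith [mul_le_mul_of_nonneg_right hk (sub_nonneg.2 (hA m.le_succ))]
  calc _ ≤ ∑ m ∈ range N, ((t - 1) * M * (((N : ℝ) - m) * (A (m + 1) - A m))
          + M * (N + 1) * (A (m + 1) - A m)) := sum_le_sum hstep
    _ = (t - 1) * M * ∑ m ∈ range N, ((N : ℝ) - m) * (A (m + 1) - A m)
          + M * (N + 1) * (A N - A 0) := by
      rw [sum_add_distrib, ← mul_sum, ← mul_sum, sum_range_sub]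
    _ ≤ _ := by nlinarith [mul_le_mul_of_nonneg_left hAN (by positivity : 0 ≤ M * (N + 1))]

end SortedSums

section UpperBound

variable {n : ℕ}

lemma sum_sum_posPart_sub_le {t M : ℝ} (hM : 0 ≤ M)
    (hMk : ∀ k : ℕ, 1 ≤ k → k < n → (k : ℝ) * ((n : ℝ) - k) ≤ M * (k * t + ((n : ℝ) - k)))
    {a : Fin n → ℝ} (ha : ∀ i j, a i ≤ t * a j) :
    ∑ i, ∑ j, (a i - a j)⁺ ≤ (t - 1) * M * ∑ i, a i := by
  cases n with
  | zero => simp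
  | succ N =>
    let A : ℕ → ℝ := fun i => a (Tuple.sort a (Fin.clamp i N))
    have hA : Monotone A := fun i j hij =>
      Tuple.monotone_sort a (Fin.mk_le_mk.2 (min_le_min_right N hij))
    have hsum : ∀ f : ℝ → ℝ, ∑ i, f (a i) = ∑ i ∈ range (N + 1), f (A i) := by
      intro f
      rw [← Fin.sum_univ_eq_sum_range, ← Equiv.sum_comp (Tuple.sort a)]
      refine sum_congr rfl fun i _ => ?_
      simp [A, Fin.clamp, Nat.min_eq_left (Nat.lt_succ_iff.1 i.2)]
    have hdouble : ∑ i, ∑ j, (a i - a j)⁺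
        = ∑ i ∈ range (N + 1), ∑ j ∈ range (N + 1), (A i - A j)⁺ := by
      rw [hsum (fun x => ∑ j, (x - a j)⁺)]
      exact sum_congr rfl fun i _ => hsum (fun y => (A i - y)⁺)
    rw [hdouble, hsum (fun x => x)]
    refine sum_sum_posPart_sub_le_of_monotone hM (fun k hk1 hkN => ?_) hA (ha _ _)
    simpa using hMk k hk1 (Nat.lt_succ_of_le hkN)

lemma sum_sum_fTheta_le {θ t M : ℝ} (hθ : θ ∈ Set.Icc (0 : ℝ) 1) (ht : 1 < t) (hM : 0 ≤ M)
    (hMk : ∀ k : ℕ, 1 ≤ k → k < n → (k : ℝ) * ((n : ℝ) - k) ≤ M * (k * t + ((n : ℝ) - k)))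
    {a : Fin n → ℝ} (hpos : ∀ i, 0 < a i) (ha : ∀ i j, a i ≤ t * a j) :
    ∑ i, ∑ j, fTheta θ (a i) (a j) ≤ (fTheta θ t 1 + fTheta θ 1 t) * M * ∑ i, a i := by
  have hF : 0 ≤ fTheta θ t 1 + fTheta θ 1 t :=
    add_nonneg (fTheta_nonneg hθ (one_pos.trans ht) one_pos)
      (fTheta_nonneg hθ one_pos (one_pos.trans ht))
  have hpair : ∑ i, ∑ j, fTheta θ (a i) (a j)
      ≤ (fTheta θ t 1 + fTheta θ 1 t) * (∑ i, ∑ j, (a i - a j)⁺) / (t - 1) := by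
    calc _ ≤ ∑ i, ∑ j, (fTheta θ t 1 * (a i - a j)⁺ + fTheta θ 1 t * (a j - a i)⁺) / (t - 1) :=
          sum_le_sum fun i _ => sum_le_sum fun j _ =>
            fTheta_le_posPart hθ ht (hpos i) (hpos j) (ha i j) (ha j i)
      _ = _ := by
        simp only [← sum_div, sum_add_distrib, ← mul_sum]
        rw [sum_comm (f := fun i j => (a j - a i)⁺), add_mul]
  calc _ ≤ (fTheta θ t 1 + fTheta θ 1 t) * ((t - 1) * M * ∑ i, a i) / (t - 1) := by
        refine hpair.trans (div_le_div_of_nonneg_right ?_ (sub_pos.2 ht).le)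
        exact mul_le_mul_of_nonneg_left (sum_sum_posPart_sub_le hM hMk ha) hF
    _ = _ := by field_simp [(sub_pos.2 ht).ne']

lemma sum_sum_Jc_le {d : ℕ} {θ ε M : ℝ} (hθ : θ ∈ Set.Icc (0 : ℝ) 1) (hε : 0 < ε) (hM : 0 ≤ M)
    (hMk : ∀ k : ℕ, 1 ≤ k → k < n →
      (k : ℝ) * ((n : ℝ) - k) ≤ M * (k * Real.exp ε + ((n : ℝ) - k)))
    {p : Fin n → Fin d → ℝ} (hp : IsDP ε p) (hpos : ∀ i k, 0 < p i k) :
    ∑ i, ∑ j, Jc θ (p i) (p j)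
      ≤ n * ((fTheta θ (Real.exp ε) 1 + fTheta θ 1 (Real.exp ε)) * M) := by
  calc ∑ i, ∑ j, Jc θ (p i) (p j) = ∑ k, ∑ i, ∑ j, fTheta θ (p i k) (p j k) := by
        simp only [Jc_eq_sum_fTheta]
        rw [sum_congr rfl fun i _ => sum_comm]
        exact sum_comm
    _ ≤ ∑ k, (fTheta θ (Real.exp ε) 1 + fTheta θ 1 (Real.exp ε)) * M * ∑ i, p i k :=
        sum_le_sum fun k _ => sum_sum_fTheta_le hθ (Real.one_lt_exp_iff.2 hε) hM hMk
          (fun i => hpos i k) (fun i j => hp.2 i j k)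
    _ = n * ((fTheta θ (Real.exp ε) 1 + fTheta θ 1 (Real.exp ε)) * M) := by
        rw [← mul_sum, sum_comm]
        simp [fun i => (hp.1 i).2, mul_comm]

lemma mul_minPairsC_le_sum_sum_Jc {d : ℕ} (θ : ℝ) (p : Fin n → Fin d → ℝ) :
    n * (n - 1) * minPairsC θ p ≤ ∑ i, ∑ j, Jc θ (p i) (p j) := by
  have hle : ∀ i j, i ≠ j → minPairsC θ p ≤ Jc θ (p i) (p j) := fun i j hij =>
    ciInf_le (Set.finite_range _).bddBelow (⟨(i, j), hij⟩ : {q : Fin n × Fin n // q.1 ≠ q.2})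
  calc n * (n - 1) * minPairsC θ p = ∑ i : Fin n, ∑ j, if i ≠ j then minPairsC θ p else 0 := by
        simp only [ne_eq, ← sum_filter, sum_const, filter_ne, card_erase_of_mem (mem_univ _),
          card_univ, Fintype.card_fin, nsmul_eq_mul]
        rcases n with _ | n
        · simp
        · push_cast
          ring
    _ ≤ _ := sum_le_sum fun i _ => sum_le_sum fun j _ => by
        split_ifs with hij
        · exact hle i j hij
        · simp [not_not.1 hij, Jc]

end UpperBound

section MaxK

variable {n : ℕ} {ε : ℝ}

lemma maxK_set_finite (n : ℕ) (ε : ℝ) : {x : ℝ | ∃ k : ℕ, 1 ≤ k ∧ 2 * k ≤ n ∧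
    x = ((k : ℝ) * ((n : ℝ) - (k : ℝ))) / ((k : ℝ) * Real.exp ε + (n : ℝ) - (k : ℝ))}.Finite :=
  ((Set.finite_Iic n).image fun k : ℕ =>
      ((k : ℝ) * ((n : ℝ) - (k : ℝ))) / ((k : ℝ) * Real.exp ε + (n : ℝ) - (k : ℝ))).subset
    (by rintro _ ⟨k, -, hk, rfl⟩; exact ⟨k, Set.mem_Iic.2 (by omega), rfl⟩)

lemma exists_maxK_eq (hn : 2 ≤ n) : ∃ k : ℕ, 1 ≤ k ∧ 2 * k ≤ n ∧
    maxK n ε = ((k : ℝ) * ((n : ℝ) - (k : ℝ))) / ((k : ℝ) * Real.exp ε + (n : ℝ) - (k : ℝ)) := by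
  refine Set.Nonempty.csSup_mem ?_ (maxK_set_finite n ε)
  exact ⟨_, 1, le_rfl, hn, rfl⟩

lemma le_maxK {k : ℕ} (hk : 1 ≤ k) (hkn : 2 * k ≤ n) :
    ((k : ℝ) * ((n : ℝ) - (k : ℝ))) / ((k : ℝ) * Real.exp ε + (n : ℝ) - (k : ℝ)) ≤ maxK n ε :=
  le_csSup (maxK_set_finite n ε).bddAbove ⟨k, hk, hkn, rfl⟩

lemma mul_le_maxK_mul_of_two_mul_le (hε : 0 < ε) {k : ℕ} (hk : 1 ≤ k) (hkn : 2 * k ≤ n) :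
    (k : ℝ) * ((n : ℝ) - k) ≤ maxK n ε * (k * Real.exp ε + ((n : ℝ) - k)) := by
  have hden : 0 < (k : ℝ) * Real.exp ε + ((n : ℝ) - k) := by
    have : (2 * k : ℝ) ≤ n := by exact_mod_cast hkn
    nlinarith [Real.one_lt_exp_iff.2 hε, (by exact_mod_cast hk : (1 : ℝ) ≤ k)]
  rw [← div_le_iff₀ hden, ← add_sub_assoc]
  exact le_maxK hk hkn

lemma maxK_nonneg (hε : 0 < ε) (hn : 2 ≤ n) : 0 ≤ maxK n ε := by
  have h := mul_le_maxK_mul_of_two_mul_le (n := n) hε le_rfl hn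
  have hn' : (2 : ℝ) ≤ n := by exact_mod_cast hn
  push_cast at h
  by_contra! hneg
  nlinarith [mul_neg_of_neg_of_pos hneg (by linarith [Real.exp_pos ε] : 0 < Real.exp ε + (n - 1))]

/-- For `2k > n` the bound follows from the one for `n - k`, since the denominator only grows
when `k` and `n - k` are exchanged. -/
lemma mul_le_maxK_mul (hε : 0 < ε) (hn : 2 ≤ n) {k : ℕ} (hk : 1 ≤ k) (hkn : k < n) :
    (k : ℝ) * ((n : ℝ) - k) ≤ maxK n ε * (k * Real.exp ε + ((n : ℝ) - k)) := by
  rcases le_or_gt (2 * k) n with h | h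
  · exact mul_le_maxK_mul_of_two_mul_le hε hk h
  · have h' := mul_le_maxK_mul_of_two_mul_le (n := n) hε (k := n - k) (by omega) (by omega)
    have hkn' : (k : ℝ) < n := by exact_mod_cast hkn
    have h2k : (n : ℝ) < 2 * k := by exact_mod_cast h
    rw [Nat.cast_sub hkn.le, sub_sub_cancel] at h'
    nlinarith [mul_nonneg (maxK_nonneg hε hn) (mul_nonneg (by linarith : (0 : ℝ) ≤ 2 * k - n)
      (sub_nonneg.2 (Real.one_lt_exp_iff.2 hε).le))]

end MaxK

lemma minPairsC_le {n d : ℕ} {θ ε : ℝ} (hθ : θ ∈ Set.Icc (0 : ℝ) 1) (hε : 0 < ε) (hn : 2 ≤ n)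
    {p : Fin n → Fin d → ℝ} (hp : IsDP ε p) (hpos : ∀ i k, 0 < p i k) :
    minPairsC θ p
      ≤ (fTheta θ (Real.exp ε) 1 + fTheta θ 1 (Real.exp ε)) / ((n : ℝ) - 1) * maxK n ε := by
  have hn' : (2 : ℝ) ≤ n := by exact_mod_cast hn
  have h := (mul_minPairsC_le_sum_sum_Jc θ p).trans
    (sum_sum_Jc_le hθ hε (maxK_nonneg hε hn) (fun k => mul_le_maxK_mul hε hn) hp hpos)
  rw [div_mul_eq_mul_div, le_div_iff₀ (by linarith)]
  refine le_of_mul_le_mul_left ?_ (by linarith : (0 : ℝ) < n)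
  linarith

section SubsetCounts

variable {α : Type*} [DecidableEq α] {s : Finset α} {k : ℕ} {i j : α}

lemma card_filter_mem_powersetCard (hi : i ∈ s) (hk : 1 ≤ k) :
    #{S ∈ s.powersetCard k | i ∈ S} = (#s - 1).choose (k - 1) := by
  simpa using card_filter_powersetCard_subset {i} s k (singleton_subset_iff.2 hi) (by simpa using hk)

lemma filter_notMem_powersetCard (i : α) :
    {S ∈ s.powersetCard k | i ∉ S} = (s.erase i).powersetCard k := by
  ext S
  simp [mem_powersetCard, subset_erase, and_right_comm]

lemma card_filter_notMem_powersetCard (hi : i ∈ s) :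
    #{S ∈ s.powersetCard k | i ∉ S} = (#s - 1).choose k := by
  rw [filter_notMem_powersetCard, card_powersetCard, card_erase_of_mem hi]

lemma card_filter_mem_notMem_powersetCard (hi : i ∈ s) (hj : j ∈ s) (hij : i ≠ j) (hk : 1 ≤ k) :
    #{S ∈ s.powersetCard k | i ∈ S ∧ j ∉ S} = (#s - 2).choose (k - 1) := by
  have h : {S ∈ s.powersetCard k | i ∈ S ∧ j ∉ S} = {S ∈ (s.erase j).powersetCard k | i ∈ S} := by
    rw [← filter_notMem_powersetCard, filter_filter]
    simp only [and_comm]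
  rw [h, card_filter_mem_powersetCard (mem_erase.2 ⟨hij, hi⟩) hk, card_erase_of_mem hj]
  rfl

end SubsetCounts

lemma exists_isDP_of_finset {n : ℕ} {α : Type*} (s : Finset α) {ε : ℝ} (q : Fin n → α → ℝ)
    (hpos : ∀ i S, 0 < q i S) (hsum : ∀ i, ∑ S ∈ s, q i S = 1)
    (hdp : ∀ i j S, q i S ≤ Real.exp ε * q j S) :
    ∃ (d : ℕ) (p : Fin n → Fin d → ℝ), IsDP ε p ∧ (∀ i k, 0 < p i k) ∧
      ∀ θ i j, Jc θ (p i) (p j) = ∑ S ∈ s, fTheta θ (q i S) (q j S) := by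
  have hreindex : ∀ g : α → ℝ, ∑ m, g (s.equivFin.symm m) = ∑ S ∈ s, g S := fun g =>
    (Equiv.sum_comp s.equivFin.symm (fun S => g S)).trans (sum_coe_sort s g)
  refine ⟨#s, fun i m => q i (s.equivFin.symm m),
    ⟨fun i => ⟨fun m => (hpos i _).le, (hreindex _).trans (hsum i)⟩, fun i j m => hdp i j _⟩,
    fun i m => hpos i _, fun θ i j => ?_⟩
  rw [Jc_eq_sum_fTheta]
  exact hreindex fun S => fTheta θ (q i S) (q j S)

section SubsetMechanism

variable {α : Type*} [DecidableEq α] {s : Finset α} {k : ℕ} {i j : α}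

lemma sum_ite_mem_powersetCard (t : ℝ) (hi : i ∈ s) (hk : 1 ≤ k) :
    ∑ S ∈ s.powersetCard k, (if i ∈ S then t else 1)
      = t * (#s - 1).choose (k - 1) + (#s - 1).choose k := by
  rw [sum_ite, sum_const, sum_const, card_filter_mem_powersetCard hi hk,
    card_filter_notMem_powersetCard hi, nsmul_eq_mul, nsmul_eq_mul, mul_one, mul_comm]

lemma sum_fTheta_ite_mem_powersetCard (θ t : ℝ) (hi : i ∈ s) (hj : j ∈ s) (hij : i ≠ j)
    (hk : 1 ≤ k) :
    ∑ S ∈ s.powersetCard k, fTheta θ (if i ∈ S then t else 1) (if j ∈ S then t else 1)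
      = (#s - 2).choose (k - 1) * (fTheta θ t 1 + fTheta θ 1 t) := by
  have hsplit : ∀ S : Finset α,
      fTheta θ (if i ∈ S then t else 1) (if j ∈ S then t else 1)
        = (if i ∈ S ∧ j ∉ S then fTheta θ t 1 else 0)
          + (if j ∈ S ∧ i ∉ S then fTheta θ 1 t else 0) := by
    intro S
    by_cases hiS : i ∈ S <;> by_cases hjS : j ∈ S <;> simp [hiS, hjS, fTheta_self]
  rw [sum_congr rfl fun S _ => hsplit S, sum_add_distrib, ← sum_filter, ← sum_filter, sum_const,
    sum_const, card_filter_mem_notMem_powersetCard hi hj hij hk,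
    card_filter_mem_notMem_powersetCard hj hi hij.symm hk, nsmul_eq_mul, nsmul_eq_mul, mul_add]

end SubsetMechanism

lemma choose_div_eq {n k : ℕ} (hk : 1 ≤ k) (hkn : k < n) {t : ℝ} (ht : 0 < t) :
    ((n - 2).choose (k - 1) : ℝ) / (t * (n - 1).choose (k - 1) + (n - 1).choose k)
      = k * ((n : ℝ) - k) / (((n : ℝ) - 1) * (k * t + (n : ℝ) - k)) := by
  obtain ⟨m, rfl⟩ : ∃ m, n = m + 2 := ⟨n - 2, by omega⟩
  obtain ⟨K, rfl⟩ : ∃ K, k = K + 1 := ⟨k - 1, by omega⟩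
  simp only [show m + 2 - 2 = m by omega, show m + 2 - 1 = m + 1 by omega, Nat.add_sub_cancel]
  have hB : (m.choose K : ℝ) * (m + 1) = (m + 1).choose K * ((m : ℝ) + 1 - K) := by
    have h := congrArg (Nat.cast : ℕ → ℝ) (Nat.choose_mul_succ_eq m K)
    push_cast [Nat.cast_sub (by omega : K ≤ m + 1)] at h
    exact h
  have hC : ((m : ℝ) + 1) * m.choose K = (m + 1).choose (K + 1) * ((K : ℝ) + 1) := by
    exact_mod_cast Nat.add_one_mul_choose_eq m K
  have hBpos : (0 : ℝ) < (m + 1).choose K := by exact_mod_cast Nat.choose_pos (by omega)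
  have hKm : (K : ℝ) ≤ m := by exact_mod_cast (by omega : K ≤ m)
  push_cast
  have hden : 0 < ((m : ℝ) + 2 - 1) * (((K : ℝ) + 1) * t + (m + 2) - (K + 1)) := by
    apply mul_pos <;> nlinarith
  rw [div_eq_div_iff (by positivity) hden.ne']
  linear_combination ((K : ℝ) + 1) * t * hB + ((m : ℝ) + 1 - K) * hC

lemma exists_isDP_minPairsC_eq {n : ℕ} {θ ε : ℝ} (hε : 0 < ε) (hn : 2 ≤ n) :
    ∃ (d : ℕ) (p : Fin n → Fin d → ℝ), IsDP ε p ∧ (∀ i k, 0 < p i k) ∧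
      minPairsC θ p
        = (fTheta θ (Real.exp ε) 1 + fTheta θ 1 (Real.exp ε)) / ((n : ℝ) - 1) * maxK n ε := by
  obtain ⟨k, hk, hkn, hmax⟩ := exists_maxK_eq (ε := ε) hn
  set t := Real.exp ε
  have ht : 1 < t := Real.one_lt_exp_iff.2 hε
  set Z : ℝ := t * (n - 1).choose (k - 1) + (n - 1).choose k
  have hZ : 0 < Z := by
    have : (0 : ℝ) < (n - 1).choose (k - 1) := by exact_mod_cast Nat.choose_pos (by omega)
    positivity
  obtain ⟨d, p, hp, hpos, hJ⟩ := exists_isDP_of_finset ((univ : Finset (Fin n)).powersetCard k)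
    (ε := ε) (fun i S => (if i ∈ S then t else 1) / Z)
    (fun i S => div_pos (by split_ifs <;> linarith) hZ)
    (fun i => by
      rw [← sum_div, sum_ite_mem_powersetCard t (mem_univ i) hk, card_univ, Fintype.card_fin,
        div_self hZ.ne'])
    (fun i j S => by
      rw [mul_div_assoc']
      refine div_le_div_of_nonneg_right ?_ hZ.le
      split_ifs <;> nlinarith)
  refine ⟨d, p, hp, hpos, ?_⟩
  have hpair : ∀ q : {q : Fin n × Fin n // q.1 ≠ q.2}, Jc θ (p q.1.1) (p q.1.2)
      = ((n - 2).choose (k - 1) : ℝ) / Z * (fTheta θ t 1 + fTheta θ 1 t) := by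
    rintro ⟨⟨i, j⟩, hij⟩
    simp only [hJ, div_eq_inv_mul _ Z, fTheta_mul_mul]
    rw [← mul_sum, sum_fTheta_ite_mem_powersetCard θ t (mem_univ i) (mem_univ j) hij hk,
      card_univ, Fintype.card_fin]
    ring
  have : Nonempty {q : Fin n × Fin n // q.1 ≠ q.2} :=
    ⟨⟨(⟨0, by omega⟩, ⟨1, by omega⟩), by simp [Fin.ext_iff]⟩⟩
  rw [minPairsC, iInf_congr hpair, ciInf_const, hmax, choose_div_eq hk (by omega) (by positivity)]
  field_simp

/-- For every real `θ ∈ [0,1]`, every real `ε > 0`, and every integer `n ≥ 2`,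
`M_n^C(ε;J_θ) = ((f_θ(e^ε,1)+f_θ(1,e^ε))/(n−1)) · max_{1 ≤ k ≤ n/2} k(n−k)/(k e^ε + n − k)`. -/
theorem statement0 (θ ε : ℝ) (hθ : θ ∈ Set.Icc (0 : ℝ) 1) (hε : 0 < ε)
    (n : ℕ) (hn : 2 ≤ n) :
    MC n ε θ =
      (fTheta θ (Real.exp ε) 1 + fTheta θ 1 (Real.exp ε)) / ((n : ℝ) - 1) * maxK n ε := by
  obtain ⟨d, p, hp, hpos, hval⟩ := exists_isDP_minPairsC_eq (θ := θ) hε hn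
  refine IsGreatest.csSup_eq ⟨⟨d, p, hp, hpos, hval.symm⟩, ?_⟩
  rintro _ ⟨d, p, hp, hpos, rfl⟩
  exact minPairsC_le hθ hε hn hp hpos
end
end

section
/- For every real θ ∈ [0,1], every real ε > 0, and every integer n ≥ 2, M_n^EC(ε;J_θ) = M_n^C(ε;J_θ); that is, the supremum of min_{i≠j} J_θ(ρ_i,ρ_j) over full-rank n-tuples in EC_n(ε) equals the supremum of min_{i≠j} J_θ(p_i,p_j) over ε-DP n-tuples of probability vectors with positive entries. -/
open scoped BigOperators Classical ComplexOrder
open Matrix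

noncomputable section

/-!
Every tuple in `EC_n(ε)` is the image of an `ε`-DP tuple `p` under the measure-and-prepare map
`e_k ↦ σ_k`, and the RLD Fisher information cannot increase under this map: with
`c_k = q_k - p_k` and `w_k = (1 - θ) p_k + θ q_k`, the block matrix
`[[∑ (c_k² / w_k) σ_k, ∑ c_k σ_k], [∑ c_k σ_k, ∑ w_k σ_k]]` is a sum of positive semidefinite
blocks `[[a², ab], [ab, b²]] ⊗ σ_k`, and the trace of its Schur complement gives
`J_θ(ρ, ρ') ≤ J_θ(p, q)`. Dropping the outcomes where `p` vanishes (by the DP constraint this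
support is common to all `p_i`) makes `p` entrywise positive without changing any `J_θ`.
Conversely, diagonal matrices embed the classical tuples into `EC_n(ε)` with the same Fisher
informations.
-/

namespace Matrix

variable {m : Type*}

lemma PosDef.one_sub_smul_add_smul {A B : Matrix m m ℂ} (hA : A.PosDef) (hB : B.PosDef)
    {θ : ℝ} (h0 : 0 ≤ θ) (h1 : θ ≤ 1) : ((1 - θ : ℂ) • A + (θ : ℂ) • B).PosDef := by
  rcases h0.eq_or_lt with rfl | h0
  · simpa using hA
  · have h1' : (0 : ℂ) ≤ 1 - θ := by exact_mod_cast sub_nonneg.2 h1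
    exact PosDef.posSemidef_add (hA.posSemidef.smul h1') (hB.smul (by exact_mod_cast h0))

lemma fromBlocks_sum {ι α n o : Type*} [AddCommMonoid α] (s : Finset ι)
    (A : ι → Matrix n m α) (B : ι → Matrix n o α) (C : ι → Matrix o m α) (D : ι → Matrix o o α) :
    fromBlocks (∑ i ∈ s, A i) (∑ i ∈ s, B i) (∑ i ∈ s, C i) (∑ i ∈ s, D i)
      = ∑ i ∈ s, fromBlocks (A i) (B i) (C i) (D i) := by
  ext (i | i) (j | j) <;> simp [sum_apply]

variable [Fintype m]

lemma PosSemidef.fromBlocks_smul_of_mul_self_eq {S : Matrix m m ℂ} (hS : S.PosSemidef)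
    {a b t c w : ℝ} (ht : a * a = t) (hc : a * b = c) (hw : b * b = w) :
    (fromBlocks ((t : ℂ) • S) ((c : ℂ) • S) ((c : ℂ) • S) ((w : ℂ) • S)).PosSemidef := by
  set N : Matrix m (m ⊕ m) ℂ := fromCols ((a : ℂ) • 1) ((b : ℂ) • 1)
  have hN : fromBlocks ((t : ℂ) • S) ((c : ℂ) • S) ((c : ℂ) • S) ((w : ℂ) • S) = Nᴴ * S * N := by
    rw [conjTranspose_fromCols_eq_fromRows_conjTranspose, fromRows_mul, fromRows_mul_fromCols]
    simp only [conjTranspose_smul, conjTranspose_one, Complex.star_def, Complex.conj_ofReal,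
      smul_mul, Matrix.mul_smul, mul_one, Matrix.one_mul, smul_smul, ← ht, ← hc, ← hw]
    push_cast
    rw [mul_comm (b : ℂ) a]
  rw [hN]
  exact hS.conjTranspose_mul_mul_same N

lemma PosSemidef.fromBlocks_smul {S : Matrix m m ℂ} (hS : S.PosSemidef) {c w : ℝ}
    (hw : 0 ≤ w) (hc : w = 0 → c = 0) :
    (fromBlocks (((c ^ 2 / w : ℝ) : ℂ) • S) ((c : ℂ) • S) ((c : ℂ) • S)
      ((w : ℂ) • S)).PosSemidef := by
  rcases hw.eq_or_lt with rfl | hw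
  · simpa [hc rfl] using hS.fromBlocks_smul_of_mul_self_eq (a := 0) (b := 0) rfl rfl rfl
  · have hsqrt : Real.sqrt w ≠ 0 := (Real.sqrt_pos.2 hw).ne'
    refine hS.fromBlocks_smul_of_mul_self_eq (a := c / Real.sqrt w) (b := Real.sqrt w) ?_ ?_
      (Real.mul_self_sqrt hw.le)
    · rw [div_mul_div_comm, Real.mul_self_sqrt hw.le, sq]
    · exact div_mul_cancel₀ c hsqrt

lemma PosSemidef.re_trace_nonneg {A : Matrix m m ℂ} (hA : A.PosSemidef) : 0 ≤ A.trace.re :=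
  (Complex.nonneg_iff.1 hA.trace_nonneg).1

variable [DecidableEq m]

lemma re_trace_mul_inv_mul_le_of_fromBlocks {A X τ : Matrix m m ℂ} (hX : X.IsHermitian)
    (hτ : τ.PosDef) (h : (fromBlocks A X X τ).PosSemidef) :
    (X * τ⁻¹ * X).trace.re ≤ A.trace.re := by
  have := hτ.isUnit.invertible
  have hschur := (PosDef.fromBlocks₂₂ A X hτ).1 (by rwa [hX.eq])
  rw [hX.eq] at hschur
  simpa [trace_sub, sub_nonneg] using hschur.re_trace_nonneg

end Matrix

section FisherInformation

variable {d m : ℕ}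

lemma Jq_eq_re_trace (θ : ℝ) (ρ σ : Matrix (Fin d) (Fin d) ℂ) :
    Jq θ ρ σ = ((σ - ρ) * ((1 - θ : ℂ) • ρ + (θ : ℂ) • σ)⁻¹ * (σ - ρ)).trace.re := by
  rw [Jq, pow_two, ← trace_mul_cycle (σ - ρ) _ (σ - ρ)]

theorem Jq_sum_smul_le_Jc {θ : ℝ} {p q : Fin m → ℝ} {σ : Fin m → Matrix (Fin d) (Fin d) ℂ}
    (hσ : ∀ k, IsDensityMatrix (σ k)) (hw : ∀ k, 0 ≤ (1 - θ) * p k + θ * q k)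
    (hw0 : ∀ k, (1 - θ) * p k + θ * q k = 0 → q k - p k = 0)
    (hτ : ((1 - θ : ℂ) • ∑ k, (p k : ℂ) • σ k + (θ : ℂ) • ∑ k, (q k : ℂ) • σ k).PosDef) :
    Jq θ (∑ k, (p k : ℂ) • σ k) (∑ k, (q k : ℂ) • σ k) ≤ Jc θ p q := by
  set w : Fin m → ℝ := fun k => (1 - θ) * p k + θ * q k
  set c : Fin m → ℝ := fun k => q k - p k
  have hX : ∑ k, (q k : ℂ) • σ k - ∑ k, (p k : ℂ) • σ k = ∑ k, (c k : ℂ) • σ k := by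
    simp only [c, ← Finset.sum_sub_distrib, ← sub_smul, Complex.ofReal_sub]
  have hτw : (1 - θ : ℂ) • ∑ k, (p k : ℂ) • σ k + (θ : ℂ) • ∑ k, (q k : ℂ) • σ k
      = ∑ k, (w k : ℂ) • σ k := by
    simp only [w, Finset.smul_sum, smul_smul, ← Finset.sum_add_distrib, ← add_smul]
    push_cast
    rfl
  have hXherm : (∑ k, (c k : ℂ) • σ k).IsHermitian :=
    isSelfAdjoint_sum _ fun k _ => IsSelfAdjoint.smul (Complex.conj_ofReal _) (hσ k).1.1
  have hblock : (fromBlocks (∑ k, ((c k ^ 2 / w k : ℝ) : ℂ) • σ k) (∑ k, (c k : ℂ) • σ k)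
      (∑ k, (c k : ℂ) • σ k) (∑ k, (w k : ℂ) • σ k)).PosSemidef := by
    rw [fromBlocks_sum]
    exact posSemidef_sum _ fun k _ => (hσ k).1.fromBlocks_smul (hw k) (hw0 k)
  calc Jq θ (∑ k, (p k : ℂ) • σ k) (∑ k, (q k : ℂ) • σ k)
      = ((∑ k, (c k : ℂ) • σ k) * (∑ k, (w k : ℂ) • σ k)⁻¹ * ∑ k, (c k : ℂ) • σ k).trace.re := by
        rw [Jq_eq_re_trace, hX, hτw]
    _ ≤ (∑ k, ((c k ^ 2 / w k : ℝ) : ℂ) • σ k).trace.re :=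
        re_trace_mul_inv_mul_le_of_fromBlocks hXherm (hτw ▸ hτ) hblock
    _ = Jc θ p q := by
        simp only [trace_sum, trace_smul, (hσ _).2, smul_eq_mul, mul_one, Complex.re_sum,
          Complex.ofReal_re]
        rfl

lemma Jq_diagonal {θ : ℝ} (p q : Fin d → ℝ) (hw : ∀ k, (1 - θ) * p k + θ * q k ≠ 0) :
    Jq θ (diagonal fun k => (p k : ℂ)) (diagonal fun k => (q k : ℂ)) = Jc θ p q := by
  set w : Fin d → ℂ := fun k => ((1 - θ) * p k + θ * q k : ℝ)
  have hτ : (1 - θ : ℂ) • diagonal (fun k => (p k : ℂ)) + (θ : ℂ) • diagonal (fun k => (q k : ℂ))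
      = diagonal w := by
    rw [← diagonal_smul, ← diagonal_smul, diagonal_add]
    congr 1
    ext k
    simp [w]
  have hτinv : (diagonal w)⁻¹ = diagonal w⁻¹ :=
    inv_eq_right_inv <| by
      rw [diagonal_mul_diagonal, ← diagonal_one]
      congr 1
      ext k
      exact mul_inv_cancel₀ (Complex.ofReal_ne_zero.2 (hw k))
  rw [Jq, hτ, hτinv, diagonal_sub, diagonal_pow, diagonal_mul_diagonal, trace_diagonal,
    Complex.re_sum]
  refine Finset.sum_congr rfl fun k _ => ?_
  simp only [w, Pi.pow_apply, Pi.inv_apply, ← Complex.ofReal_sub, ← Complex.ofReal_pow,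
    ← Complex.ofReal_inv, ← Complex.ofReal_mul, Complex.ofReal_re, div_eq_mul_inv]

end FisherInformation

section DifferentialPrivacy

variable {n d : ℕ} {ε : ℝ} {p : Fin n → Fin d → ℝ}

lemma IsDP.eq_zero_of_eq_zero (hp : IsDP ε p) {i : Fin n} {k : Fin d} (h : p i k = 0)
    (j : Fin n) : p j k = 0 :=
  le_antisymm (by simpa [h] using hp.2 j i k) ((hp.1 j).1 k)

lemma IsDP.sub_eq_zero_of_weight_eq_zero (hp : IsDP ε p) {θ : ℝ} (h0 : 0 ≤ θ) (h1 : θ ≤ 1)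
    {i j : Fin n} {k : Fin d} (h : (1 - θ) * p i k + θ * p j k = 0) : p j k - p i k = 0 := by
  have hi := mul_nonneg (sub_nonneg.2 h1) ((hp.1 i).1 k)
  have hj := mul_nonneg h0 ((hp.1 j).1 k)
  have hik : p i k = 0 := by
    rcases h1.lt_or_eq with h1 | rfl
    · exact (mul_eq_zero.1 (by linarith : (1 - θ) * p i k = 0)).resolve_left (by linarith)
    · exact hp.eq_zero_of_eq_zero (by simpa using h) i
  rw [hik, hp.eq_zero_of_eq_zero hik j, sub_zero]

lemma IsDP.exists_pos_Jc_eq (hp : IsDP ε p) (θ : ℝ) :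
    ∃ (d' : ℕ) (p' : Fin n → Fin d' → ℝ), IsDP ε p' ∧ (∀ i k, 0 < p' i k) ∧
      ∀ i j, Jc θ (p' i) (p' j) = Jc θ (p i) (p j) := by
  set K := Finset.univ.filter fun k => ∀ i, 0 < p i k
  have hzero : ∀ k ∉ K, ∀ i, p i k = 0 := by
    intro k hk
    obtain ⟨i, hi⟩ : ∃ i, p i k ≤ 0 := by simpa [K] using hk
    exact hp.eq_zero_of_eq_zero (le_antisymm hi ((hp.1 i).1 k))
  have hsum : ∀ f : Fin d → ℝ, (∀ k ∉ K, f k = 0) → ∑ a, f (K.equivFin.symm a) = ∑ k, f k :=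
    fun f hf => by
      rw [Equiv.sum_comp K.equivFin.symm (fun k : K => f k), Finset.sum_coe_sort,
        Finset.sum_subset (Finset.subset_univ K) fun k _ hk => hf k hk]
  refine ⟨K.card, fun i a => p i (K.equivFin.symm a),
    ⟨fun i => ⟨fun a => (hp.1 i).1 _, ?_⟩, fun i j a => hp.2 i j _⟩,
    fun i a => (Finset.mem_filter.1 (K.equivFin.symm a).2).2 i,
    fun i j => hsum (fun k => (p j k - p i k) ^ 2 / ((1 - θ) * p i k + θ * p j k))
      fun k hk => by simp [hzero k hk]⟩
  rw [hsum _ fun k hk => hzero k hk i, (hp.1 i).2]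

lemma IsDP.inEC_diagonal (hp : IsDP ε p) : InEC ε fun i => diagonal fun k => (p i k : ℂ) := by
  refine ⟨d, p, fun k => diagonal (Pi.single k 1), hp, fun k => ⟨?_, ?_⟩, fun i => ?_⟩
  · exact posSemidef_diagonal_iff.2 fun l => by
      rcases eq_or_ne l k with rfl | h <;> simp [*]
  · simp
  · ext a b
    rcases eq_or_ne a b with rfl | h <;> simp [Matrix.sum_apply, Pi.single_apply, *]

end DifferentialPrivacy

section Supremum

variable {n d m : ℕ} {ε θ : ℝ}

lemma minPairsQ_sum_smul_le_minPairsC {p : Fin n → Fin m → ℝ} (hp : IsDP ε p)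
    (h0 : 0 ≤ θ) (h1 : θ ≤ 1)
    {σ : Fin m → Matrix (Fin d) (Fin d) ℂ} (hσ : ∀ k, IsDensityMatrix (σ k))
    (hρ : ∀ i, (∑ k, (p i k : ℂ) • σ k).PosDef) :
    minPairsQ θ (fun i => ∑ k, (p i k : ℂ) • σ k) ≤ minPairsC θ p :=
  ciInf_mono (Set.finite_range _).bddBelow fun _ =>
    Jq_sum_smul_le_Jc hσ
      (fun k => add_nonneg (mul_nonneg (sub_nonneg.2 h1) ((hp.1 _).1 k))
        (mul_nonneg h0 ((hp.1 _).1 k)))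
      (fun _ => hp.sub_eq_zero_of_weight_eq_zero h0 h1) ((hρ _).one_sub_smul_add_smul (hρ _) h0 h1)

lemma minPairsQ_diagonal {p : Fin n → Fin d → ℝ} (h0 : 0 ≤ θ) (h1 : θ ≤ 1)
    (hpos : ∀ i k, 0 < p i k) :
    minPairsQ θ (fun i => diagonal fun k => (p i k : ℂ)) = minPairsC θ p :=
  iInf_congr fun ij => Jq_diagonal _ _ fun k => by
    have hi := hpos ij.1.1 k
    have hj := hpos ij.1.2 k
    have hw : 0 < (1 - θ) * p ij.1.1 k + θ * p ij.1.2 k := by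
      nlinarith [mul_nonneg (sub_nonneg.2 h1) hi.le, mul_nonneg h0 hj.le]
    exact hw.ne'

end Supremum

theorem statement2_general (θ ε : ℝ) (hθ : θ ∈ Set.Icc (0 : ℝ) 1)
    (n : ℕ) :
    MEC n ε θ = MC n ε θ := by
  obtain ⟨h0, h1⟩ := hθ
  -- Mutual domination gives equal `sSup`s even for empty or unbounded sets.
  refine csSup_eq_csSup_of_forall_exists_le ?_ ?_
  · rintro x ⟨d, ρ, ⟨m, p, σ, hp, hσ, hρ⟩, hρpd, rfl⟩
    obtain rfl : ρ = fun i => ∑ k, (p i k : ℂ) • σ k := funext hρ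
    obtain ⟨d', p', hp', hpos', hJ⟩ := hp.exists_pos_Jc_eq θ
    refine ⟨minPairsC θ p', ⟨d', p', hp', hpos', rfl⟩, ?_⟩
    rw [show minPairsC θ p' = minPairsC θ p from iInf_congr fun _ => hJ _ _]
    exact minPairsQ_sum_smul_le_minPairsC hp h0 h1 hσ hρpd
  · rintro x ⟨d, p, hp, hpos, rfl⟩
    refine ⟨_, ⟨d, _, hp.inEC_diagonal, fun i => ?_, rfl⟩, (minPairsQ_diagonal h0 h1 hpos).ge⟩
    exact posDef_diagonal_iff.2 fun k => by exact_mod_cast hpos i k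

/-- `M_n^EC(ε;J_θ) = M_n^C(ε;J_θ)` for all `θ ∈ [0,1]`, `ε > 0`, `n ≥ 2`. -/
theorem statement2 (θ ε : ℝ) (hθ : θ ∈ Set.Icc (0 : ℝ) 1) (hε : 0 < ε)
    (n : ℕ) (hn : 2 ≤ n) :
    MEC n ε θ = MC n ε θ :=
  statement2_general θ ε hθ n

end
end

section
/- Let φ : (0,∞)^n → ℝ be sublinear (φ(x+y) ≤ φ(x)+φ(y) and φ(αx) = αφ(x) for all x,y ∈ (0,∞)^n and α > 0), and let Φ_C be the function on n-tuples of probability vectors defined by Φ_C(p_1,…,p_n) = Σ_{k : p_1(k),…,p_n(k) > 0} φ(p_1(k),…,p_n(k)). Then for all ε > 0 and n ≥ 2, the supremum of Φ_C over all ε-DP n-tuples (over all dimensions) equals the maximum of Σ_{v ∈ S_n(ε)} φ(v(1),…,v(n)) α_v over all families of nonnegative reals (α_v)_{v ∈ S_n(ε)} satisfying Σ_{v ∈ S_n(ε)} α_v v = (1,…,1) ∈ ℝ^n, where S_n(ε) = {1, e^ε}^n. -/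
/-!
An LP-feasible family `α` is itself an `ε`-DP tuple: its columns are the scaled vertices `α_v v`,
on which `Φ_C` equals the LP objective by homogeneity. Conversely, a positive column `c` of an
`ε`-DP tuple satisfies `m ≤ c ≤ e^ε m` for `m = min c`, so `c = m (1 + (e^ε - 1) b)` with
`b ∈ [0,1]^n`; this is `m` times the mean of the vertices of `{1, e^ε}^n` under the product of
Bernoulli(`b_i`) laws. Sublinearity bounds `φ(c)` by the same combination of the values of `φ` at
the vertices, and summing these weights over the columns gives an LP-feasible family. Hence the
two sets have the same upper bounds, and so the same supremum.
-/

open scoped BigOperators Classical ComplexOrder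
open Matrix

noncomputable section

section Cube

variable {ι : Type*}

def cubeVertex (E : ℝ) (s : ι → Bool) : ι → ℝ := fun i => if s i then E else 1

lemma cubeVertex_pos {E : ℝ} (hE : 0 < E) (s : ι → Bool) (i : ι) : 0 < cubeVertex E s i := by
  unfold cubeVertex
  split <;> linarith

lemma cubeVertex_le_mul {E : ℝ} (hE : 1 ≤ E) (s t : ι → Bool) (i j : ι) :
    cubeVertex E s i ≤ E * cubeVertex E t j := by
  unfold cubeVertex
  split <;> split <;> nlinarith

lemma eq_zero_of_not_forall_pos {E : ℝ} {c : ι → ℝ} (h0 : ∀ i, 0 ≤ c i)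
    (hcE : ∀ i j, c i ≤ E * c j) (h : ¬ ∀ i, 0 < c i) : c = 0 := by
  push Not at h
  obtain ⟨j, hj⟩ := h
  have hcj : c j = 0 := le_antisymm hj (h0 j)
  ext i
  exact le_antisymm (by simpa [hcj] using hcE i j) (h0 i)

lemma exists_le_and_le_mul [Finite ι] {E : ℝ} {c : ι → ℝ} (hc : ∀ i, 0 < c i)
    (hcE : ∀ i j, c i ≤ E * c j) : ∃ m, 0 < m ∧ ∀ i, m ≤ c i ∧ c i ≤ E * m := by
  rcases isEmpty_or_nonempty ι with hι | hι
  · exact ⟨1, one_pos, isEmptyElim⟩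
  · obtain ⟨i₀, hi₀⟩ := Finite.exists_min c
    exact ⟨c i₀, hc i₀, fun i => ⟨hi₀ i, hcE i i₀⟩⟩

variable [Fintype ι]

def bernoulliProduct (b : ι → ℝ) (s : ι → Bool) : ℝ := ∏ i, if s i then b i else 1 - b i

lemma bernoulliProduct_nonneg {b : ι → ℝ} (hb : ∀ i, 0 ≤ b i ∧ b i ≤ 1) (s : ι → Bool) :
    0 ≤ bernoulliProduct b s :=
  Finset.prod_nonneg fun i _ => by split <;> linarith [hb i]

variable [DecidableEq ι]

lemma sum_bernoulliProduct (b : ι → ℝ) : ∑ s, bernoulliProduct b s = 1 := by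
  unfold bernoulliProduct
  simp [← Fintype.prod_sum fun i (x : Bool) => if x then b i else 1 - b i]

lemma sum_bernoulliProduct_mul_cubeVertex (b : ι → ℝ) (E : ℝ) (i : ι) :
    ∑ s, bernoulliProduct b s * cubeVertex E s i = 1 + (E - 1) * b i := by
  have hsplit : ∀ s : ι → Bool, bernoulliProduct b s * cubeVertex E s i =
      ∏ j, (if s j then b j else 1 - b j) * (if j = i then cubeVertex E s j else 1) := by
    intro s
    rw [Finset.prod_mul_distrib, Finset.prod_ite_eq']
    simp [bernoulliProduct]
  simp_rw [hsplit, cubeVertex]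
  rw [← Fintype.prod_sum fun j (x : Bool) =>
    (if x then b j else 1 - b j) * (if j = i then (if x then E else 1) else 1)]
  simp only [Fintype.sum_bool, if_true, Bool.false_eq_true, if_false, ite_self, mul_one, mul_ite,
    ite_add, add_sub_cancel, Finset.prod_ite_eq', Finset.mem_univ]
  ring

lemma exists_sum_smul_cubeVertex_eq {E m : ℝ} (hE : 1 < E) (hm : 0 < m) {c : ι → ℝ}
    (hc : ∀ i, m ≤ c i ∧ c i ≤ E * m) :
    ∃ β : (ι → Bool) → ℝ, (∀ s, 0 ≤ β s) ∧ ∑ s, β s = m ∧ ∑ s, β s • cubeVertex E s = c := by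
  have hE1 : 0 < E - 1 := by linarith
  have hD : 0 < m * (E - 1) := mul_pos hm hE1
  set b : ι → ℝ := fun i => (c i - m) / (m * (E - 1))
  have hb : ∀ i, 0 ≤ b i ∧ b i ≤ 1 := fun i =>
    ⟨div_nonneg (by linarith [hc i]) hD.le, (div_le_one hD).2 (by linarith [hc i])⟩
  refine ⟨fun s => m * bernoulliProduct b s,
    fun s => mul_nonneg hm.le (bernoulliProduct_nonneg hb s),
    by rw [← Finset.mul_sum, sum_bernoulliProduct, mul_one], ?_⟩
  ext i
  simp only [Finset.sum_apply, Pi.smul_apply, smul_eq_mul, mul_assoc, ← Finset.mul_sum,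
    sum_bernoulliProduct_mul_cubeVertex, b]
  field_simp [hm.ne', hE1.ne']
  ring

end Cube

structure IsSublinearOnPos {ι : Type*} (φ : (ι → ℝ) → ℝ) : Prop where
  add_le : ∀ x y : ι → ℝ, (∀ i, 0 < x i) → (∀ i, 0 < y i) → φ (x + y) ≤ φ x + φ y
  smul_eq : ∀ (a : ℝ) (x : ι → ℝ), 0 < a → (∀ i, 0 < x i) → φ (a • x) = a * φ x

namespace IsSublinearOnPos

variable {ι : Type*} {φ : (ι → ℝ) → ℝ}

section Sum

variable {κ : Type*} {β : κ → ℝ} {w : κ → ι → ℝ}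

lemma map_sum_smul_le_of_pos (hφ : IsSublinearOnPos φ) {T : Finset κ} (hT : T.Nonempty)
    (hβ : ∀ t ∈ T, 0 < β t) (hw : ∀ t ∈ T, ∀ i, 0 < w t i) :
    φ (∑ t ∈ T, β t • w t) ≤ ∑ t ∈ T, β t * φ (w t) := by
  induction hT using Finset.Nonempty.cons_induction with
  | singleton a => simpa using (hφ.smul_eq _ _ (hβ a (by simp)) (hw a (by simp))).le
  | cons a T ha hT ih =>
    simp only [Finset.mem_cons, forall_eq_or_imp] at hβ hw
    have hrest : ∀ i, 0 < (∑ t ∈ T, β t • w t) i := fun i => by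
      simpa using Finset.sum_pos (fun t ht => mul_pos (hβ.2 t ht) (hw.2 t ht i)) hT
    calc φ (∑ t ∈ Finset.cons a T ha, β t • w t)
        ≤ φ (β a • w a) + φ (∑ t ∈ T, β t • w t) := by
          rw [Finset.sum_cons]
          exact hφ.add_le _ _ (fun i => mul_pos hβ.1 (hw.1 i)) hrest
      _ ≤ β a * φ (w a) + ∑ t ∈ T, β t * φ (w t) := by
          rw [hφ.smul_eq _ _ hβ.1 hw.1]
          exact add_le_add_right (ih hβ.2 hw.2) _
      _ = ∑ t ∈ Finset.cons a T ha, β t * φ (w t) := by rw [Finset.sum_cons]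

lemma map_sum_smul_le (hφ : IsSublinearOnPos φ) {T : Finset κ} (hβ : ∀ t ∈ T, 0 ≤ β t)
    (hβT : 0 < ∑ t ∈ T, β t) (hw : ∀ t ∈ T, ∀ i, 0 < w t i) :
    φ (∑ t ∈ T, β t • w t) ≤ ∑ t ∈ T, β t * φ (w t) := by
  have hsupp : ∀ t ∈ T, β t ≠ 0 → 0 < β t := fun t ht h => (hβ t ht).lt_of_ne' h
  have hT' : (T.filter (0 < β ·)).Nonempty := by
    rw [← Finset.sum_filter_of_ne hsupp] at hβT
    exact Finset.nonempty_of_sum_ne_zero hβT.ne'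
  have key := hφ.map_sum_smul_le_of_pos hT' (fun t ht => (Finset.mem_filter.1 ht).2)
    (fun t ht => hw t (Finset.mem_filter.1 ht).1)
  rwa [Finset.sum_filter_of_ne fun t ht h => hsupp t ht (left_ne_zero_of_smul h),
    Finset.sum_filter_of_ne fun t ht h => hsupp t ht (left_ne_zero_of_mul h)] at key

end Sum

lemma exists_cubeVertex_decomposition_le [Fintype ι] [DecidableEq ι] (hφ : IsSublinearOnPos φ)
    {E : ℝ} (hE : 1 < E) {c : ι → ℝ} [Decidable (∀ i, 0 < c i)] (h0 : ∀ i, 0 ≤ c i)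
    (hcE : ∀ i j, c i ≤ E * c j) :
    ∃ β : (ι → Bool) → ℝ, (∀ s, 0 ≤ β s) ∧ ∑ s, β s • cubeVertex E s = c ∧
      (if ∀ i, 0 < c i then φ c else 0) ≤ ∑ s, β s * φ (cubeVertex E s) := by
  by_cases hc : ∀ i, 0 < c i
  · obtain ⟨m, hm, hmc⟩ := exists_le_and_le_mul hc hcE
    obtain ⟨β, hβ0, hβm, hβc⟩ := exists_sum_smul_cubeVertex_eq hE hm hmc
    refine ⟨β, hβ0, hβc, ?_⟩
    rw [if_pos hc, ← hβc]
    exact hφ.map_sum_smul_le (fun s _ => hβ0 s) (hβm ▸ hm)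
      (fun s _ => cubeVertex_pos (by linarith) s)
  · refine ⟨0, fun _ => le_rfl, ?_, ?_⟩
    · simp [eq_zero_of_not_forall_pos h0 hcE hc]
    · simp [hc]

end IsSublinearOnPos

lemma IsSublinearOnPos.exists_lp_feasible_ge_of_isDP {n d : ℕ} {φ : (Fin n → ℝ) → ℝ}
    (hφ : IsSublinearOnPos φ) {ε : ℝ} (hε : 0 < ε) {p : Fin n → Fin d → ℝ} (hp : IsDP ε p) :
    ∃ α : (Fin n → Bool) → ℝ, (∀ s, 0 ≤ α s) ∧
      (∀ i, ∑ s, α s * cubeVertex (Real.exp ε) s i = 1) ∧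
      (∑ k, if ∀ i, 0 < p i k then φ (fun i => p i k) else 0) ≤
        ∑ s, α s * φ (cubeVertex (Real.exp ε) s) := by
  choose β hβ0 hβp hβφ using fun k => hφ.exists_cubeVertex_decomposition_le
    (Real.one_lt_exp_iff.2 hε) (c := fun i => p i k) (fun i => (hp.1 i).1 k) (fun i j => hp.2 i j k)
  refine ⟨fun s => ∑ k, β k s, fun s => Finset.sum_nonneg fun k _ => hβ0 k s, fun i => ?_, ?_⟩
  · calc ∑ s, (∑ k, β k s) * cubeVertex (Real.exp ε) s i
        = ∑ k, (∑ s, β k s • cubeVertex (Real.exp ε) s) i := by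
          simp only [Finset.sum_mul, Finset.sum_apply, Pi.smul_apply, smul_eq_mul]
          exact Finset.sum_comm
      _ = 1 := by simp only [hβp, (hp.1 i).2]
  · calc _ ≤ ∑ k, ∑ s, β k s * φ (cubeVertex (Real.exp ε) s) :=
          Finset.sum_le_sum fun k _ => hβφ k
      _ = _ := by simp only [Finset.sum_mul]; exact Finset.sum_comm

lemma exists_isDP_eq_lp_value {n : ℕ} {φ : (Fin n → ℝ) → ℝ}
    (hsmul : ∀ (a : ℝ) (x : Fin n → ℝ), 0 < a → (∀ i, 0 < x i) → φ (a • x) = a * φ x)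
    {ε : ℝ} (hε : 0 ≤ ε) {α : (Fin n → Bool) → ℝ} (hα0 : ∀ s, 0 ≤ α s)
    (hα1 : ∀ i, ∑ s, α s * cubeVertex (Real.exp ε) s i = 1) :
    ∃ (d : ℕ) (p : Fin n → Fin d → ℝ), IsDP ε p ∧
      (∑ k, if ∀ i, 0 < p i k then φ (fun i => p i k) else 0) =
        ∑ s, α s * φ (cubeVertex (Real.exp ε) s) := by
  set E := Real.exp ε
  have hE : 1 ≤ E := Real.one_le_exp hε
  have hv : ∀ (s : Fin n → Bool) i, 0 < cubeVertex E s i := cubeVertex_pos (by linarith)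
  -- Only the vertices of positive weight become columns, so that every column is positive.
  let e := (Fintype.equivFin {s : Fin n → Bool // 0 < α s}).symm
  have reindex : ∀ g : (Fin n → Bool) → ℝ, (∀ s, α s = 0 → g s = 0) →
      ∑ k, g (e k) = ∑ s, g s := by
    intro g hg
    rw [e.sum_comp (fun s => g s), ← Finset.sum_subtype (Finset.univ.filter (0 < α ·)) (by simp),
      Finset.sum_filter_of_ne fun s _ hs => (hα0 s).lt_of_ne' fun h => hs (hg s h)]
  have hcol : ∀ k i, 0 < α (e k) * cubeVertex E (e k) i := fun k i => mul_pos (e k).2 (hv _ i)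
  refine ⟨_, fun i k => α (e k) * cubeVertex E (e k) i,
    ⟨fun i => ⟨fun k => (hcol k i).le, ?_⟩, fun i j k => ?_⟩, ?_⟩
  · rw [reindex (fun s => α s * cubeVertex E s i) fun s h => by simp [h]]
    exact hα1 i
  · calc α (e k) * cubeVertex E (e k) i ≤ α (e k) * (E * cubeVertex E (e k) j) :=
          mul_le_mul_of_nonneg_left (cubeVertex_le_mul hE _ _ _ _) (e k).2.le
      _ = E * (α (e k) * cubeVertex E (e k) j) := by ring
  · rw [← reindex (fun s => α s * φ (cubeVertex E s)) fun s h => by simp [h]]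
    refine Finset.sum_congr rfl fun k _ => ?_
    rw [if_pos (hcol k)]
    exact hsmul _ _ (e k).2 (hv _)

theorem statement7_general (n : ℕ) (ε : ℝ) (hε : 0 < ε)
    (φ : (Fin n → ℝ) → ℝ)
    (hadd : ∀ x y : Fin n → ℝ, (∀ i, 0 < x i) → (∀ i, 0 < y i) → φ (x + y) ≤ φ x + φ y)
    (hsmul : ∀ (a : ℝ) (x : Fin n → ℝ), 0 < a → (∀ i, 0 < x i) → φ (a • x) = a * φ x) :
    sSup {x : ℝ | ∃ (d : ℕ) (p : Fin n → Fin d → ℝ), IsDP ε p ∧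
        x = ∑ k, if ∀ i, 0 < p i k then φ (fun i => p i k) else 0}
    = sSup {y : ℝ | ∃ α : (Fin n → Bool) → ℝ, (∀ s, 0 ≤ α s) ∧
        (∀ i, ∑ s, α s * (if s i then Real.exp ε else 1) = 1) ∧
        y = ∑ s, α s * φ (fun i => if s i then Real.exp ε else 1)} := by
  apply csSup_eq_csSup_of_forall_exists_le
  · rintro _ ⟨d, p, hp, rfl⟩
    obtain ⟨α, hα0, hα1, hle⟩ :=
      IsSublinearOnPos.exists_lp_feasible_ge_of_isDP ⟨hadd, hsmul⟩ hε hp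
    exact ⟨_, ⟨α, hα0, hα1, rfl⟩, hle⟩
  · rintro _ ⟨α, hα0, hα1, rfl⟩
    obtain ⟨d, p, hp, heq⟩ := exists_isDP_eq_lp_value hsmul hε.le hα0 hα1
    exact ⟨_, ⟨d, p, hp, rfl⟩, heq.ge⟩

/-- for sublinear `φ : (0,∞)^n → ℝ`, the supremum over all `ε`-DP `n`-tuples
(over all dimensions) of `Φ_C(p_1,…,p_n) = Σ_{k : all p_i(k)>0} φ(p_1(k),…,p_n(k))` equals
the value of the linear program over `S_n(ε) = {1, e^ε}^n`. -/
theorem statement7 (n : ℕ) (hn : 2 ≤ n) (ε : ℝ) (hε : 0 < ε)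
    (φ : (Fin n → ℝ) → ℝ)
    (hadd : ∀ x y : Fin n → ℝ, (∀ i, 0 < x i) → (∀ i, 0 < y i) → φ (x + y) ≤ φ x + φ y)
    (hsmul : ∀ (a : ℝ) (x : Fin n → ℝ), 0 < a → (∀ i, 0 < x i) → φ (a • x) = a * φ x) :
    sSup {x : ℝ | ∃ (d : ℕ) (p : Fin n → Fin d → ℝ), IsDP ε p ∧
        x = ∑ k, if ∀ i, 0 < p i k then φ (fun i => p i k) else 0}
    = sSup {y : ℝ | ∃ α : (Fin n → Bool) → ℝ, (∀ s, 0 ≤ α s) ∧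
        (∀ i, ∑ s, α s * (if s i then Real.exp ε else 1) = 1) ∧
        y = ∑ s, α s * φ (fun i => if s i then Real.exp ε else 1)} :=
  statement7_general n ε hε φ hadd hsmul
end
end

section
/- Let n ≥ 2 be an integer, c ∈ [0,1) and ε, t > 0 real numbers, and let (u_1,…,u_n) be unit vectors in ℝ^n with ⟨u_i,u_j⟩ = c for all i ≠ j. Define density matrices ρ_i = (1/(n+t))(I_n + t|u_i⟩⟨u_i|) for i = 1,…,n. If D = (e^ε − 1)² + 4(1−c²)e^ε and 0 < t ≤ t_max := 2(e^ε − 1)/(√D + 1 − e^ε), then (ρ_1,…,ρ_n) is CQ ε-DP. -/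
open scoped BigOperators Classical ComplexOrder
open Matrix

noncomputable section

/-!
The matrices are real, so it suffices to test `e^ε ρ_j - ρ_i` against real vectors `y`. With
`a = ⟨u_i, y⟩` and `b = ⟨u_j, y⟩`, Bessel's inequality for the pair `u_i, u_j` reads
`a² + b² - 2cab ≤ (1 - c²)‖y‖²`, which reduces the claim to the nonnegativity of a binary
quadratic form in `(a, b)`. Its discriminant condition is `t² e^ε (1 - c²) ≤ (e^ε - 1)² (1 + t)`,
a quadratic inequality in `t` whose positive root is `t_max`.
-/

theorem Matrix.PosSemidef.map_ofReal {m : Type*} [Fintype m] {A : Matrix m m ℝ}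
    (hA : A.PosSemidef) : (A.map ((↑) : ℝ → ℂ)).PosSemidef := by
  obtain ⟨k, v, rfl⟩ := posSemidef_iff_eq_sum_vecMulVec.mp hA
  have hmap : (∑ i, vecMulVec (v i) (star (v i))).map ((↑) : ℝ → ℂ) =
      ∑ i, vecMulVec (fun a => (v i a : ℂ)) (star fun a => (v i a : ℂ)) := by
    ext a b; simp [vecMulVec_apply, Matrix.sum_apply]
  rw [hmap]
  exact posSemidef_sum _ fun i _ => posSemidef_vecMulVec_self_star _

theorem isCQDP_map_ofReal {n d : ℕ} {ε : ℝ} {ρ : Fin n → Matrix (Fin d) (Fin d) ℝ}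
    (hpos : ∀ i, (ρ i).PosSemidef) (htr : ∀ i, (ρ i).trace = 1)
    (hdp : ∀ i j, (Real.exp ε • ρ j - ρ i).PosSemidef) :
    IsCQDP ε fun i => (ρ i).map ((↑) : ℝ → ℂ) := by
  refine ⟨fun i => ⟨(hpos i).map_ofReal, ?_⟩, fun i j => ?_⟩
  · simp [Matrix.trace, ← Complex.ofReal_sum, ← htr i]
  · convert (hdp i j).map_ofReal using 1
    ext a b; simp [Complex.real_smul]

theorem sq_dotProduct_le {m : Type*} [Fintype m] (v w : m → ℝ) :
    (v ⬝ᵥ w) ^ 2 ≤ (v ⬝ᵥ v) * (w ⬝ᵥ w) := by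
  simpa only [dotProduct, sq] using Finset.sum_mul_sq_le_sq_mul_sq Finset.univ v w

theorem bessel_dotProduct_pair {m : Type*} [Fintype m] {u v : m → ℝ} (hu : u ⬝ᵥ u = 1)
    (hv : v ⬝ᵥ v = 1) (y : m → ℝ) :
    (u ⬝ᵥ y) ^ 2 + (v ⬝ᵥ y) ^ 2 - 2 * (u ⬝ᵥ v) * (u ⬝ᵥ y) * (v ⬝ᵥ y) ≤
      (1 - (u ⬝ᵥ v) ^ 2) * (y ⬝ᵥ y) := by
  -- Cauchy–Schwarz for `v - c u` and `y - a u`, whose dot product is `b - c a`.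
  have hcs := sq_dotProduct_le (v - (u ⬝ᵥ v) • u) (y - (u ⬝ᵥ y) • u)
  simp only [sub_dotProduct, dotProduct_sub, smul_dotProduct, dotProduct_smul, smul_eq_mul,
    hu, hv, dotProduct_comm v u, dotProduct_comm y u] at hcs
  nlinarith [hcs]

theorem sq_mul_le_of_le_tmax {c E t : ℝ} (hc : c ^ 2 < 1) (hE : 0 < E) (ht : 0 < t)
    (htmax : t ≤ 2 * (E - 1) / (Real.sqrt ((E - 1) ^ 2 + 4 * (1 - c ^ 2) * E) + 1 - E)) :
    t ^ 2 * E * (1 - c ^ 2) ≤ (E - 1) ^ 2 * (1 + t) := by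
  set D := (E - 1) ^ 2 + 4 * (1 - c ^ 2) * E
  have hD : (E - 1) ^ 2 < D := by have := mul_pos (sub_pos.2 hc) hE; linarith
  have hsqrt : E - 1 < Real.sqrt D :=
    (le_abs_self _).trans_lt (Real.lt_sqrt_of_sq_lt (by rwa [sq_abs]))
  have hden : 0 < Real.sqrt D + 1 - E := by linarith
  have hsqD : Real.sqrt D ^ 2 = D := Real.sq_sqrt (by positivity)
  rw [le_div_iff₀ hden] at htmax
  have h : t * Real.sqrt D ≤ (E - 1) * (2 + t) := by linarith
  nlinarith [mul_nonneg ht.le (Real.sqrt_nonneg D), sq_nonneg (t * Real.sqrt D)]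

theorem quadForm_nonneg_of_sq_mul_le {a b c E t : ℝ} (hc : c ^ 2 < 1) (hE : 1 ≤ E) (ht : 0 < t)
    (hkey : t ^ 2 * E * (1 - c ^ 2) ≤ (E - 1) ^ 2 * (1 + t)) :
    0 ≤ (E - 1 - t * (1 - c ^ 2)) * a ^ 2 - 2 * c * (E - 1) * a * b
      + (E - 1 + t * E * (1 - c ^ 2)) * b ^ 2 := by
  set s := 1 - c ^ 2
  set C := E - 1 + t * E * s
  have hs : 0 < s := sub_pos.2 hc
  have hC : 0 < C := by have := mul_pos (mul_pos ht (by linarith : (0:ℝ) < E)) hs; linarith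
  refine nonneg_of_mul_nonneg_right ?_ hC
  have hid : C * ((E - 1 - t * s) * a ^ 2 - 2 * c * (E - 1) * a * b + C * b ^ 2)
      = (C * b - c * (E - 1) * a) ^ 2 + s * ((E - 1) ^ 2 * (1 + t) - t ^ 2 * E * s) * a ^ 2 := by
    simp only [C, s]; ring
  rw [hid]
  have hdisc := sub_nonneg.2 hkey
  positivity

theorem mul_sq_le_of_bessel {a b c E t N : ℝ} (hc : c ^ 2 < 1) (hE : 1 ≤ E) (ht : 0 < t)
    (hkey : t ^ 2 * E * (1 - c ^ 2) ≤ (E - 1) ^ 2 * (1 + t))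
    (hbessel : a ^ 2 + b ^ 2 - 2 * c * a * b ≤ (1 - c ^ 2) * N) :
    t * a ^ 2 ≤ (E - 1) * N + t * E * b ^ 2 := by
  have hs : 0 < 1 - c ^ 2 := sub_pos.2 hc
  have hq := quadForm_nonneg_of_sq_mul_le (a := a) (b := b) hc hE ht hkey
  have hg := mul_le_mul_of_nonneg_left hbessel (sub_nonneg.2 hE)
  refine le_of_mul_le_mul_left ?_ hs
  nlinarith

section SpikedState

variable {m : Type*} [Fintype m] [DecidableEq m]

def spikedState (t : ℝ) (u : m → ℝ) : Matrix m m ℝ :=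
  (Fintype.card m + t)⁻¹ • (1 + t • vecMulVec u u)

theorem posSemidef_spikedState {t : ℝ} (ht : 0 ≤ t) (u : m → ℝ) :
    (spikedState t u).PosSemidef := by
  have hP : (vecMulVec u u).PosSemidef := by
    simpa using posSemidef_vecMulVec_self_star u
  exact (PosSemidef.one.add (hP.smul ht)).smul (by positivity)

theorem trace_spikedState {t : ℝ} (ht : 0 < t) {u : m → ℝ} (hu : u ⬝ᵥ u = 1) :
    (spikedState t u).trace = 1 := by
  have hne : (Fintype.card m : ℝ) + t ≠ 0 := by positivity
  simp only [spikedState, trace_smul, trace_add, trace_one, trace_vecMulVec, hu, smul_eq_mul,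
    mul_one]
  exact inv_mul_cancel₀ hne

theorem dotProduct_spikedState_mulVec (t : ℝ) (u y : m → ℝ) :
    y ⬝ᵥ (spikedState t u *ᵥ y) = (Fintype.card m + t)⁻¹ * (y ⬝ᵥ y + t * (u ⬝ᵥ y) ^ 2) := by
  simp only [spikedState, smul_mulVec, add_mulVec, one_mulVec, vecMulVec_mulVec,
    dotProduct_smul, dotProduct_add, smul_eq_mul, dotProduct_comm y u,
    MulOpposite.smul_eq_mul_unop, MulOpposite.unop_op, sq]

theorem posSemidef_smul_spikedState_sub {t c E : ℝ} (ht : 0 < t) (hE : 1 ≤ E) (hc : c ^ 2 < 1)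
    (hkey : t ^ 2 * E * (1 - c ^ 2) ≤ (E - 1) ^ 2 * (1 + t))
    {u v : m → ℝ} (hu : u ⬝ᵥ u = 1) (hv : v ⬝ᵥ v = 1) (huv : u ⬝ᵥ v = c) :
    (E • spikedState t v - spikedState t u).PosSemidef := by
  refine PosSemidef.of_dotProduct_mulVec_nonneg
    (((posSemidef_spikedState ht.le v).isHermitian.smul (IsSelfAdjoint.all E)).sub
      (posSemidef_spikedState ht.le u).isHermitian) fun y => ?_
  have hbessel := bessel_dotProduct_pair hu hv y
  rw [huv] at hbessel
  have hquad := mul_sq_le_of_bessel hc hE ht hkey hbessel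
  simp only [star_trivial, sub_mulVec, smul_mulVec, dotProduct_sub, dotProduct_smul, smul_eq_mul,
    dotProduct_spikedState_mulVec]
  have hnorm : 0 ≤ ((Fintype.card m : ℝ) + t)⁻¹ := by positivity
  nlinarith

end SpikedState

theorem statement10_general (n : ℕ) (c ε t : ℝ)
    (hc0 : 0 ≤ c) (hc1 : c < 1) (hε : 0 < ε) (ht : 0 < t)
    (u : Fin n → Fin n → ℝ) (hu : ∀ i, ∑ k, u i k ^ 2 = 1)
    (huv : ∀ i j, i ≠ j → ∑ k, u i k * u j k = c)
    (D : ℝ) (hD : D = (Real.exp ε - 1) ^ 2 + 4 * (1 - c ^ 2) * Real.exp ε)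
    (htmax : t ≤ 2 * (Real.exp ε - 1) / (Real.sqrt D + 1 - Real.exp ε)) :
    IsCQDP ε (fun i => ((n : ℝ) + t)⁻¹ •
      ((1 : Matrix (Fin n) (Fin n) ℂ) +
        t • Matrix.of fun a b => ((u i a * u i b : ℝ) : ℂ))) := by
  have hE : 1 ≤ Real.exp ε := Real.one_le_exp hε.le
  have hc : c ^ 2 < 1 := by nlinarith
  have hkey := sq_mul_le_of_le_tmax hc (Real.exp_pos ε) ht (hD ▸ htmax)
  have hunit (i : Fin n) : u i ⬝ᵥ u i = 1 := by simpa only [dotProduct, sq] using hu i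
  have hρ : (fun i => ((n : ℝ) + t)⁻¹ • ((1 : Matrix (Fin n) (Fin n) ℂ) +
      t • Matrix.of fun a b => ((u i a * u i b : ℝ) : ℂ))) =
      fun i => (spikedState t (u i)).map ((↑) : ℝ → ℂ) := by
    ext i a b
    by_cases hab : a = b <;> simp [spikedState, vecMulVec_apply, one_apply, Complex.real_smul, hab]
  rw [hρ]
  refine isCQDP_map_ofReal (fun i => posSemidef_spikedState ht.le _)
    (fun i => trace_spikedState ht (hunit i)) fun i j => ?_
  obtain rfl | hij := eq_or_ne i j
  · simpa only [sub_smul, one_smul] using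
      (posSemidef_spikedState ht.le (u i)).smul (sub_nonneg.2 hE)
  · exact posSemidef_smul_spikedState_sub ht hE hc hkey (hunit i) (hunit j) (huv i j hij)

/-- with unit vectors `u_i ∈ ℝ^n` of pairwise inner product `c ∈ [0,1)`, the
tuple `ρ_i = (1/(n+t))(I_n + t|u_i⟩⟨u_i|)` is CQ `ε`-DP whenever
`0 < t ≤ 2(e^ε−1)/(√D+1−e^ε)`, where `D = (e^ε−1)² + 4(1−c²)e^ε`. -/
theorem statement10 (n : ℕ) (hn : 2 ≤ n) (c ε t : ℝ)
    (hc0 : 0 ≤ c) (hc1 : c < 1) (hε : 0 < ε) (ht : 0 < t)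
    (u : Fin n → Fin n → ℝ) (hu : ∀ i, ∑ k, u i k ^ 2 = 1)
    (huv : ∀ i j, i ≠ j → ∑ k, u i k * u j k = c)
    (D : ℝ) (hD : D = (Real.exp ε - 1) ^ 2 + 4 * (1 - c ^ 2) * Real.exp ε)
    (htmax : t ≤ 2 * (Real.exp ε - 1) / (Real.sqrt D + 1 - Real.exp ε)) :
    IsCQDP ε (fun i => ((n : ℝ) + t)⁻¹ •
      ((1 : Matrix (Fin n) (Fin n) ℂ) +
        t • Matrix.of fun a b => ((u i a * u i b : ℝ) : ℂ))) :=
  statement10_general n c ε t hc0 hc1 hε ht u hu huv D hD htmax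

end
end
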